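/- arXiv:2108.05086 — 2 statements merged into one kernel-verified Lean document; each statement's English description precedes it below -/
import Mathlib

section
/- Suppose a nonnegative random variable T and event {d = i} satisfy, for every 1 ≤ k ≤ k* - m*, the conditional false alarm bound P(k ≤ T < k + m*, d = i) / P(T ≥ k) ≤ β_{i,i}. Then the weighted false alarm probability satisfies Σ_{k≥0} π_k P(T ≤ k, d = i) ≤ β_{i,i} + (1-ρ)^{m*+1}, where π_k = ρ(1-ρ)^k. -/
/-!
Since `T ≥ 1`, the conditional bound at `k = 1` is unconditional: `P(T < 1 + m*, d = i) ≤ β`.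
Hence `P(T ≤ k, d = i) ≤ β` for every `k ≤ m*`, and trivially `≤ 1` afterwards. The geometric
weights `π_k` sum to `1` and their tail beyond `m*` sums to `(1 - ρ)^(m* + 1)`.
-/

open MeasureTheory

section GeometricWeights

variable {ρ : ℝ}

lemma hasSum_geometric_weight (hρ : 0 < ρ) (hρ1 : ρ < 1) :
    HasSum (fun k : ℕ => ρ * (1 - ρ) ^ k) 1 := by
  have h := (hasSum_geometric_of_lt_one (by linarith : 0 ≤ 1 - ρ) (by linarith)).mul_left ρ
  rwa [sub_sub_cancel, mul_inv_cancel₀ hρ.ne'] at h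

lemma tsum_geometric_weight_add (hρ : 0 < ρ) (hρ1 : ρ < 1) (n : ℕ) :
    ∑' k : ℕ, ρ * (1 - ρ) ^ (k + n) = (1 - ρ) ^ n := by
  calc ∑' k : ℕ, ρ * (1 - ρ) ^ (k + n) = ∑' k : ℕ, (1 - ρ) ^ n * (ρ * (1 - ρ) ^ k) := by
        congr 1; ext k; ring
    _ = (1 - ρ) ^ n := by rw [tsum_mul_left, (hasSum_geometric_weight hρ hρ1).tsum_eq, mul_one]

lemma tsum_geometric_weight_mul_le (hρ : 0 < ρ) (hρ1 : ρ < 1) {β : ℝ} (m : ℕ) {p : ℕ → ℝ}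
    (hp0 : ∀ k, 0 ≤ p k) (hp1 : ∀ k, p k ≤ 1) (hpβ : ∀ k ≤ m, p k ≤ β) :
    ∑' k : ℕ, ρ * (1 - ρ) ^ k * p k ≤ β + (1 - ρ) ^ (m + 1) := by
  set w : ℕ → ℝ := fun k => ρ * (1 - ρ) ^ k
  have hw := hasSum_geometric_weight hρ hρ1
  have hw0 : ∀ k, 0 ≤ w k := fun k => mul_nonneg hρ.le (pow_nonneg (by linarith) k)
  have hβ0 : 0 ≤ β := (hp0 0).trans (hpβ 0 (Nat.zero_le m))
  have hwp : Summable fun k => w k * p k :=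
    hw.summable.of_nonneg_of_le (fun k => mul_nonneg (hw0 k) (hp0 k))
      (fun k => mul_le_of_le_one_right (hw0 k) (hp1 k))
  rw [← hwp.sum_add_tsum_nat_add (m + 1)]
  have head : ∑ k ∈ Finset.range (m + 1), w k * p k ≤ β :=
    calc ∑ k ∈ Finset.range (m + 1), w k * p k
        ≤ ∑ k ∈ Finset.range (m + 1), β * w k := by
          refine Finset.sum_le_sum fun k hk => ?_
          rw [mul_comm β]
          exact mul_le_mul_of_nonneg_left (hpβ k (Finset.mem_range_succ_iff.mp hk)) (hw0 k)
      _ = β * ∑ k ∈ Finset.range (m + 1), w k := (Finset.mul_sum _ _ _).symm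
      _ ≤ β * 1 := by
          gcongr
          exact (hw.summable.sum_le_tsum _ fun k _ => hw0 k).trans_eq hw.tsum_eq
      _ = β := mul_one β
  have tail : ∑' k : ℕ, w (k + (m + 1)) * p (k + (m + 1)) ≤ (1 - ρ) ^ (m + 1) :=
    calc ∑' k : ℕ, w (k + (m + 1)) * p (k + (m + 1))
        ≤ ∑' k : ℕ, w (k + (m + 1)) :=
          ((summable_nat_add_iff (m + 1)).mpr hwp).tsum_le_tsum
            (fun k => mul_le_of_le_one_right (hw0 _) (hp1 _))
            ((summable_nat_add_iff (m + 1)).mpr hw.summable)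
      _ = (1 - ρ) ^ (m + 1) := tsum_geometric_weight_add hρ hρ1 (m + 1)
  exact add_le_add head tail

end GeometricWeights

theorem weighted_pfa_from_conditional_general
    {Ω : Type*} [MeasurableSpace Ω] (μ : Measure Ω) [IsProbabilityMeasure μ]
    {ι : Type*} (T : Ω → ℕ∞) (d : Ω → ι) (i : ι)
    (hT : ∀ ω, 1 ≤ T ω)
    (ρ β : ℝ) (hρ : 0 < ρ) (hρ1 : ρ < 1)
    (mstar kstar : ℕ) (hmk : mstar < kstar)
    (h : ∀ k : ℕ, 1 ≤ k → k ≤ kstar - mstar →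
      (μ {ω | (k : ℕ∞) ≤ T ω ∧ T ω < (k + mstar : ℕ∞) ∧ d ω = i}).toReal /
        (μ {ω | (k : ℕ∞) ≤ T ω}).toReal ≤ β) :
    ∑' k : ℕ, ρ * (1 - ρ) ^ k * (μ {ω | T ω ≤ (k : ℕ∞) ∧ d ω = i}).toReal
      ≤ β + (1 - ρ) ^ (mstar + 1) := by
  have h_first : (μ {ω | T ω < 1 + mstar ∧ d ω = i}).toReal ≤ β := by
    simpa [hT] using h 1 le_rfl (by omega)
  refine tsum_geometric_weight_mul_le hρ hρ1 mstar (fun _ => ENNReal.toReal_nonneg)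
    (fun _ => measureReal_le_one) fun k hk => le_trans (measureReal_mono ?_) h_first
  rintro ω ⟨hTk, hd⟩
  refine ⟨hTk.trans_lt ?_, hd⟩
  exact_mod_cast Nat.lt_one_add_iff.mpr hk

theorem weighted_pfa_from_conditional
    {Ω : Type*} [MeasurableSpace Ω] (μ : Measure Ω) [IsProbabilityMeasure μ]
    {ι : Type*} [Fintype ι] (T : Ω → ℕ∞) (d : Ω → ι) (i : ι)
    (hT : ∀ ω, 1 ≤ T ω)
    (ρ β : ℝ) (hρ : 0 < ρ) (hρ1 : ρ < 1) (hβ : 0 < β) (hβ1 : β < 1)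
    (mstar kstar : ℕ) (hm : 1 ≤ mstar) (hmk : mstar < kstar)
    (h : ∀ k : ℕ, 1 ≤ k → k ≤ kstar - mstar →
      (μ {ω | (k : ℕ∞) ≤ T ω ∧ T ω < (k + mstar : ℕ∞) ∧ d ω = i}).toReal /
        (μ {ω | (k : ℕ∞) ≤ T ω}).toReal ≤ β) :
    ∑' k : ℕ, ρ * (1 - ρ) ^ k * (μ {ω | T ω ≤ (k : ℕ∞) ∧ d ω = i}).toReal
      ≤ β + (1 - ρ) ^ (mstar + 1) :=
  weighted_pfa_from_conditional_general μ T d i hT ρ β hρ hρ1 mstar kstar hmk h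
end

section
/- Let (ξ_n)_{n≥1} be i.i.d. standard normal random variables and 0 < θ < 1. Define X_0 = x and X_n = (1-θ) X_{n-1} + σ_θ √|X_{n-1}| ξ_n with σ_θ² = θ(1-θ). Then for every integer m ≥ 1 there exists a constant C_m (independent of x, n, θ for θ in a compact subset of (0,1)) such that E_x[X_n^{2m}] ≤ C_m (1 + x^{2m}) for all n ≥ 0 and x ∈ ℝ. -/
open MeasureTheory ProbabilityTheory
open scoped ENNReal

/-!
Write `X_{n+1} = u + v` with `u = (1-θ) X_n`, `v = σ_θ √|X_n| ξ_{n+1}`, and let `a = min K > 0`.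
Convexity of `t ↦ t^{2m}` gives `(u+v)^{2m} ≤ (1+a)^{2m} u^{2m} + (1+a⁻¹)^{2m} v^{2m}`, and
`(1+a)(1-θ) ≤ 1-a²` makes the first term contract uniformly in `θ ∈ K`. The second is at most
`(1+a⁻¹)^{2m} (δ X_n^{2m} + δ⁻¹) ξ_{n+1}^{2m}` (AM-GM on `|X_n|^m`), and `ξ_{n+1}` is independent
of `X_n`. Taking expectations yields `E X_{n+1}^{2m} ≤ r E X_n^{2m} + b` with `r < 1` for small `δ`,
and iterating bounds `E X_n^{2m}` by `x^{2m} + b/(1-r)`. Expectations are lower Lebesgue integrals,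
so no integrability of the moments has to be established beforehand.
-/

lemma add_pow_le_one_add_pow_mul_add {n : ℕ} (hn : Even n) {η : ℝ} (hη : 0 < η) (u v : ℝ) :
    (u + v) ^ n ≤ (1 + η) ^ n * u ^ n + (1 + η⁻¹) ^ n * v ^ n := by
  have hη₁ : 0 < 1 + η := by positivity
  have hw₁ : (1 + η)⁻¹ ≤ 1 := inv_le_one_of_one_le₀ (by linarith)
  have hw₂ : η / (1 + η) ≤ 1 := (div_le_one hη₁).2 (by linarith)
  have hsplit : u + v = (1 + η)⁻¹ * ((1 + η) * u) + η / (1 + η) * ((1 + η⁻¹) * v) := by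
    field_simp; ring
  calc (u + v) ^ n
      = ((1 + η)⁻¹ * ((1 + η) * u) + η / (1 + η) * ((1 + η⁻¹) * v)) ^ n := by rw [← hsplit]
    _ ≤ (1 + η)⁻¹ * ((1 + η) * u) ^ n + η / (1 + η) * ((1 + η⁻¹) * v) ^ n :=
        hn.convexOn_pow.2 (Set.mem_univ _) (Set.mem_univ _) (inv_nonneg.2 hη₁.le)
          (div_nonneg hη.le hη₁.le) (by field_simp)
    _ ≤ ((1 + η) * u) ^ n + ((1 + η⁻¹) * v) ^ n :=
        add_le_add (mul_le_of_le_one_left (hn.pow_nonneg _) hw₁)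
          (mul_le_of_le_one_left (hn.pow_nonneg _) hw₂)
    _ = (1 + η) ^ n * u ^ n + (1 + η⁻¹) ^ n * v ^ n := by rw [mul_pow, mul_pow]

lemma le_mul_sq_add_inv {δ : ℝ} (hδ : 0 < δ) (t : ℝ) : t ≤ δ * t ^ 2 + δ⁻¹ := by
  have : δ * (δ * t ^ 2 + δ⁻¹ - t) = (δ * t - 1 / 2) ^ 2 + 3 / 4 := by field_simp; ring
  nlinarith [sq_nonneg (δ * t - 1 / 2)]

lemma integral_le_of_lintegral_ofReal_le {α : Type*} [MeasurableSpace α] {μ : Measure α}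
    {f : α → ℝ} (hf : 0 ≤ᵐ[μ] f) {c : ℝ} (hc : 0 ≤ c)
    (h : ∫⁻ a, ENNReal.ofReal (f a) ∂μ ≤ ENNReal.ofReal c) : ∫ a, f a ∂μ ≤ c := by
  by_cases hfm : AEStronglyMeasurable f μ
  · rw [integral_eq_lintegral_of_nonneg_ae hf hfm]
    exact ENNReal.toReal_le_of_le_ofReal hc h
  · rwa [integral_non_aestronglyMeasurable hfm]

lemma IsCompact.exists_pos_forall_le {K : Set ℝ} (hK : IsCompact K) (hpos : ∀ θ ∈ K, 0 < θ) :
    ∃ a > 0, ∀ θ ∈ K, a ≤ θ := by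
  rcases K.eq_empty_or_nonempty with rfl | hne
  · exact ⟨1, one_pos, by simp⟩
  · exact ⟨sInf K, hpos _ (hK.sInf_mem hne), fun θ hθ => csInf_le hK.bddBelow hθ⟩

lemma ENNReal.le_add_ofReal_div_of_le_mul_add {u : ℕ → ℝ≥0∞} {r b : ℝ} (hr₀ : 0 ≤ r)
    (hr₁ : r < 1) (hb : 0 ≤ b) (hu : ∀ n, u (n + 1) ≤ ENNReal.ofReal r * u n + ENNReal.ofReal b)
    (n : ℕ) : u n ≤ u 0 + ENNReal.ofReal (b / (1 - r)) := by
  have hfix : r * (b / (1 - r)) + b = b / (1 - r) := by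
    field_simp [(sub_pos.2 hr₁).ne']; ring
  induction n with
  | zero => exact le_self_add
  | succ n ih =>
    calc u (n + 1) ≤ ENNReal.ofReal r * (u 0 + ENNReal.ofReal (b / (1 - r))) + ENNReal.ofReal b :=
          (hu n).trans (by gcongr)
      _ = ENNReal.ofReal r * u 0 + ENNReal.ofReal (r * (b / (1 - r)) + b) := by
          rw [mul_add, add_assoc, ENNReal.ofReal_add (by positivity) hb,
            ENNReal.ofReal_mul hr₀]
      _ ≤ u 0 + ENNReal.ofReal (b / (1 - r)) := by
          rw [hfix]
          gcongr
          exact mul_le_of_le_one_left' (ENNReal.ofReal_le_one.2 hr₁.le)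

section NoiseRecursion

variable {Ω α β : Type*} {f : α → β → α} {x : α} {ξ : ℕ → Ω → β}

def noiseRecursion (f : α → β → α) (x : α) (ξ : ℕ → Ω → β) : ℕ → Ω → α
  | 0, _ => x
  | n + 1, ω => f (noiseRecursion f x ξ n ω) (ξ (n + 1) ω)

lemma eq_noiseRecursion {X : ℕ → Ω → α} (h₀ : ∀ ω, X 0 ω = x)
    (hsucc : ∀ n ω, X (n + 1) ω = f (X n ω) (ξ (n + 1) ω)) : X = noiseRecursion f x ξ := by
  funext n ω
  induction n with
  | zero => exact h₀ ω
  | succ n ih => rw [hsucc, ih]; rfl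

lemma noiseRecursion_ae_eq [MeasurableSpace Ω] {μ : Measure Ω} {ξ' : ℕ → Ω → β}
    (h : ∀ i, ξ i =ᵐ[μ] ξ' i) (n : ℕ) :
    noiseRecursion f x ξ n =ᵐ[μ] noiseRecursion f x ξ' n := by
  induction n with
  | zero => rfl
  | succ n ih =>
    filter_upwards [ih, h (n + 1)] with ω hX hξ
    simp only [noiseRecursion, hX, hξ]

variable [MeasurableSpace α] [MeasurableSpace β]

lemma measurable_noiseRecursion (hf : Measurable (Function.uncurry f)) (n : ℕ) :
    Measurable[⨆ i ∈ Set.Iic n, MeasurableSpace.comap (ξ i) ‹_›] (noiseRecursion f x ξ n) := by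
  induction n with
  | zero => exact measurable_const
  | succ n ih =>
    have hX : Measurable[⨆ i ∈ Set.Iic (n + 1), MeasurableSpace.comap (ξ i) ‹_›]
        (noiseRecursion f x ξ n) :=
      ih.mono (biSup_mono fun i hi => Set.Iic_subset_Iic.2 n.le_succ hi) le_rfl
    have hξ : Measurable[⨆ i ∈ Set.Iic (n + 1), MeasurableSpace.comap (ξ i) ‹_›] (ξ (n + 1)) :=
      Measurable.of_comap_le (le_iSup₂ (f := fun i (_ : i ∈ Set.Iic (n + 1)) =>
        MeasurableSpace.comap (ξ i) ‹_›) (n + 1) (Set.mem_Iic.2 le_rfl))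
    exact hf.comp (hX.prodMk hξ)

variable [MeasurableSpace Ω] {μ : Measure Ω}

lemma indepFun_noiseRecursion_succ (hξm : ∀ i, Measurable (ξ i)) (hξ : iIndepFun ξ μ)
    (hf : Measurable (Function.uncurry f)) (n : ℕ) :
    IndepFun (noiseRecursion f x ξ n) (ξ (n + 1)) μ := by
  have h := indep_iSup_of_disjoint (fun i => (hξm i).comap_le) ((iIndepFun_iff_iIndep _ _ _).1 hξ)
    (S := Set.Iic n) (T := {n + 1}) (by simp)
  rw [iSup_singleton] at h
  rw [IndepFun_iff_Indep]
  exact indep_of_indep_of_le_left h (measurable_noiseRecursion hf n).comap_le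

lemma lintegral_noiseRecursion_succ_le {V : α → ℝ≥0∞} {g h : β → ℝ≥0∞} (hV : Measurable V)
    (hg : Measurable g) (hh : Measurable h) (hf : Measurable (Function.uncurry f))
    (hdrift : ∀ y z, V (f y z) ≤ g z * V y + h z)
    (hξm : ∀ i, Measurable (ξ i)) (hξ : iIndepFun ξ μ) (n : ℕ) :
    ∫⁻ ω, V (noiseRecursion f x ξ (n + 1) ω) ∂μ ≤
      (∫⁻ ω, g (ξ (n + 1) ω) ∂μ) * (∫⁻ ω, V (noiseRecursion f x ξ n ω) ∂μ) +
        ∫⁻ ω, h (ξ (n + 1) ω) ∂μ := by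
  have hXm : Measurable (noiseRecursion f x ξ n) :=
    (measurable_noiseRecursion hf n).mono (iSup₂_le fun i _ => (hξm i).comap_le) le_rfl
  have hgm : Measurable fun ω => g (ξ (n + 1) ω) := hg.comp (hξm _)
  have hhm : Measurable fun ω => h (ξ (n + 1) ω) := hh.comp (hξm _)
  have hVm : Measurable fun ω => V (noiseRecursion f x ξ n ω) := hV.comp hXm
  have hind : IndepFun (fun ω => g (ξ (n + 1) ω)) (fun ω => V (noiseRecursion f x ξ n ω)) μ :=
    (indepFun_noiseRecursion_succ hξm hξ hf n).symm.comp hg hV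
  calc ∫⁻ ω, V (noiseRecursion f x ξ (n + 1) ω) ∂μ
      ≤ ∫⁻ ω, g (ξ (n + 1) ω) * V (noiseRecursion f x ξ n ω) + h (ξ (n + 1) ω) ∂μ :=
        lintegral_mono fun ω => hdrift _ _
    _ = _ := by
      rw [lintegral_add_right _ hhm,
        lintegral_mul_eq_lintegral_mul_lintegral_of_indepFun'' hgm.aemeasurable hVm.aemeasurable
          hind]

variable [IsProbabilityMeasure μ] {ν : Measure β} {V : α → ℝ≥0∞} {g h : β → ℝ≥0∞} {r b : ℝ}

lemma lintegral_noiseRecursion_le_of_measurable (hV : Measurable V) (hg : Measurable g)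
    (hh : Measurable h) (hf : Measurable (Function.uncurry f))
    (hdrift : ∀ y z, V (f y z) ≤ g z * V y + h z) (hr₀ : 0 ≤ r) (hr₁ : r < 1) (hb : 0 ≤ b)
    (hgν : ∫⁻ z, g z ∂ν ≤ ENNReal.ofReal r) (hhν : ∫⁻ z, h z ∂ν ≤ ENNReal.ofReal b)
    (hξm : ∀ i, Measurable (ξ i)) (hξ : iIndepFun ξ μ) (hlaw : ∀ i, μ.map (ξ i) = ν) (n : ℕ) :
    ∫⁻ ω, V (noiseRecursion f x ξ n ω) ∂μ ≤ V x + ENNReal.ofReal (b / (1 - r)) := by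
  have hmean : ∀ i {φ : β → ℝ≥0∞}, Measurable φ → ∫⁻ ω, φ (ξ i ω) ∂μ = ∫⁻ z, φ z ∂ν :=
    fun i φ hφ => by rw [← hlaw i, lintegral_map hφ (hξm i)]
  have hstep : ∀ k, ∫⁻ ω, V (noiseRecursion f x ξ (k + 1) ω) ∂μ ≤
      ENNReal.ofReal r * ∫⁻ ω, V (noiseRecursion f x ξ k ω) ∂μ + ENNReal.ofReal b := by
    intro k
    refine (lintegral_noiseRecursion_succ_le hV hg hh hf hdrift hξm hξ k).trans ?_
    rw [hmean _ hg, hmean _ hh]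
    gcongr
  simpa [noiseRecursion] using ENNReal.le_add_ofReal_div_of_le_mul_add hr₀ hr₁ hb hstep n

theorem lintegral_noiseRecursion_le (hV : Measurable V) (hg : Measurable g)
    (hh : Measurable h) (hf : Measurable (Function.uncurry f))
    (hdrift : ∀ y z, V (f y z) ≤ g z * V y + h z) (hr₀ : 0 ≤ r) (hr₁ : r < 1) (hb : 0 ≤ b)
    (hgν : ∫⁻ z, g z ∂ν ≤ ENNReal.ofReal r) (hhν : ∫⁻ z, h z ∂ν ≤ ENNReal.ofReal b)
    (hξm : ∀ i, AEMeasurable (ξ i) μ) (hξ : iIndepFun ξ μ) (hlaw : ∀ i, μ.map (ξ i) = ν)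
    (n : ℕ) :
    ∫⁻ ω, V (noiseRecursion f x ξ n ω) ∂μ ≤ V x + ENNReal.ofReal (b / (1 - r)) := by
  have hae : ∀ i, ξ i =ᵐ[μ] (hξm i).mk := fun i => (hξm i).ae_eq_mk
  calc ∫⁻ ω, V (noiseRecursion f x ξ n ω) ∂μ
      = ∫⁻ ω, V (noiseRecursion f x (fun i => (hξm i).mk) n ω) ∂μ :=
        lintegral_congr_ae ((noiseRecursion_ae_eq hae n).fun_comp V)
    _ ≤ V x + ENNReal.ofReal (b / (1 - r)) :=
        lintegral_noiseRecursion_le_of_measurable hV hg hh hf hdrift hr₀ hr₁ hb hgν hhν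
          (fun i => (hξm i).measurable_mk) (hξ.congr hae)
          (fun i => by rw [← Measure.map_congr (hae i), hlaw]) n

end NoiseRecursion

noncomputable def epidemicStep (θ y z : ℝ) : ℝ := (1 - θ) * y + √(θ * (1 - θ)) * √|y| * z

lemma measurable_epidemicStep (θ : ℝ) : Measurable (Function.uncurry (epidemicStep θ)) := by
  unfold epidemicStep
  fun_prop

lemma epidemicStep_pow_le {m : ℕ} (hm : 1 ≤ m) {a θ δ : ℝ} (ha : 0 < a) (haθ : a ≤ θ)
    (hθ : θ < 1) (hδ : 0 < δ) (y z : ℝ) :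
    epidemicStep θ y z ^ (2 * m) ≤
      (1 - a ^ 2 + (1 + a⁻¹) ^ (2 * m) * δ * z ^ (2 * m)) * y ^ (2 * m) +
        (1 + a⁻¹) ^ (2 * m) * δ⁻¹ * z ^ (2 * m) := by
  have hm₂ : Even (2 * m) := even_two_mul m
  have hθ₀ : 0 ≤ θ * (1 - θ) := mul_nonneg (by linarith) (by linarith)
  have hdrift : ((1 + a) * (1 - θ)) ^ (2 * m) ≤ 1 - a ^ 2 :=
    calc ((1 + a) * (1 - θ)) ^ (2 * m) ≤ (1 + a) * (1 - θ) :=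
          pow_le_of_le_one (by nlinarith) (by nlinarith) (by omega)
      _ ≤ 1 - a ^ 2 := by nlinarith
  have hnoise : (√(θ * (1 - θ)) * √|y| * z) ^ (2 * m) ≤ |y| ^ m * z ^ (2 * m) := by
    rw [mul_pow, mul_pow, pow_mul, pow_mul, Real.sq_sqrt hθ₀, Real.sq_sqrt (abs_nonneg y),
      mul_assoc]
    exact mul_le_of_le_one_left (mul_nonneg (by positivity) (hm₂.pow_nonneg z))
      (pow_le_one₀ hθ₀ (by nlinarith))
  have hyoung : |y| ^ m ≤ δ * y ^ (2 * m) + δ⁻¹ := by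
    simpa [← pow_mul, mul_comm m 2, hm₂.pow_abs] using le_mul_sq_add_inv hδ (|y| ^ m)
  calc epidemicStep θ y z ^ (2 * m)
      ≤ (1 + a) ^ (2 * m) * ((1 - θ) * y) ^ (2 * m) +
          (1 + a⁻¹) ^ (2 * m) * (√(θ * (1 - θ)) * √|y| * z) ^ (2 * m) :=
        add_pow_le_one_add_pow_mul_add hm₂ ha _ _
    _ = ((1 + a) * (1 - θ)) ^ (2 * m) * y ^ (2 * m) +
          (1 + a⁻¹) ^ (2 * m) * (√(θ * (1 - θ)) * √|y| * z) ^ (2 * m) := by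
        rw [mul_pow (1 - θ), ← mul_assoc, ← mul_pow]
    _ ≤ (1 - a ^ 2) * y ^ (2 * m) +
          (1 + a⁻¹) ^ (2 * m) * ((δ * y ^ (2 * m) + δ⁻¹) * z ^ (2 * m)) := by
        gcongr
        · exact hm₂.pow_nonneg y
        · exact hnoise.trans (by gcongr; exact hm₂.pow_nonneg z)
    _ = _ := by ring

lemma ofReal_epidemicStep_pow_le {m : ℕ} (hm : 1 ≤ m) {a θ δ : ℝ} (ha : 0 < a) (haθ : a ≤ θ)
    (hθ : θ < 1) (hδ : 0 < δ) (y z : ℝ) :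
    ENNReal.ofReal (epidemicStep θ y z ^ (2 * m)) ≤
      ENNReal.ofReal (1 - a ^ 2 + (1 + a⁻¹) ^ (2 * m) * δ * z ^ (2 * m)) *
          ENNReal.ofReal (y ^ (2 * m)) +
        ENNReal.ofReal ((1 + a⁻¹) ^ (2 * m) * δ⁻¹ * z ^ (2 * m)) := by
  have hz := (even_two_mul m).pow_nonneg z
  have hg : 0 ≤ 1 - a ^ 2 + (1 + a⁻¹) ^ (2 * m) * δ * z ^ (2 * m) :=
    add_nonneg (by nlinarith) (by positivity)
  rw [← ENNReal.ofReal_mul hg,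
    ← ENNReal.ofReal_add (mul_nonneg hg ((even_two_mul m).pow_nonneg y)) (by positivity)]
  exact ENNReal.ofReal_le_ofReal (epidemicStep_pow_le hm ha haθ hθ hδ y z)

lemma lintegral_ofReal_add_mul_pow_gaussianReal (μ : ℝ) (v : NNReal) {r s : ℝ} (hr : 0 ≤ r)
    (hs : 0 ≤ s) {k : ℕ} (hk : Even k) :
    ∫⁻ z, ENNReal.ofReal (r + s * z ^ k) ∂gaussianReal μ v =
      ENNReal.ofReal (r + s * ∫ z, z ^ k ∂gaussianReal μ v) := by
  have hint : Integrable (fun z : ℝ => z ^ k) (gaussianReal μ v) := by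
    simpa [hk.pow_abs] using
      (memLp_id_gaussianReal' (μ := μ) (v := v) k (by simp)).integrable_norm_pow'
  have hint' : Integrable (fun z : ℝ => r + s * z ^ k) (gaussianReal μ v) :=
    (integrable_const r).add (hint.const_mul s)
  rw [← ofReal_integral_eq_lintegral_ofReal hint'
      (ae_of_all _ fun z => by have := hk.pow_nonneg z; positivity),
    integral_add (integrable_const r) (hint.const_mul s), integral_const_mul]
  simp

theorem epidemic_moment_bound
    {Ω : Type*} [MeasurableSpace Ω] (μ : Measure Ω) [IsProbabilityMeasure μ]
    (m : ℕ) (hm : 1 ≤ m) (K : Set ℝ) (hK : IsCompact K) (hKsub : K ⊆ Set.Ioo 0 1) :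
    ∃ C : ℝ, 0 < C ∧ ∀ θ ∈ K, ∀ x : ℝ, ∀ ξ : ℕ → Ω → ℝ,
      iIndepFun ξ μ →
      (∀ n, Measure.map (ξ n) μ = gaussianReal 0 1) →
      ∀ X : ℕ → Ω → ℝ,
        (∀ ω, X 0 ω = x) →
        (∀ n ω, X (n + 1) ω =
          (1 - θ) * X n ω + Real.sqrt (θ * (1 - θ)) * Real.sqrt |X n ω| * ξ (n + 1) ω) →
        ∀ n, ∫ ω, (X n ω) ^ (2 * m) ∂μ ≤ C * (1 + x ^ (2 * m)) := by
  obtain ⟨a, ha, haK⟩ := hK.exists_pos_forall_le fun θ hθ => (hKsub hθ).1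
  have hm₂ : Even (2 * m) := even_two_mul m
  set M := ∫ z, z ^ (2 * m) ∂gaussianReal 0 1
  have hM : 0 ≤ M := integral_nonneg hm₂.pow_nonneg
  set c := (1 + a⁻¹) ^ (2 * m)
  set δ := a ^ 2 / (c * (M + 1))
  set r := 1 - a ^ 2 + c * δ * M
  have hr : 1 - r = a ^ 2 / (M + 1) := by simp only [r, δ, c]; field_simp; ring
  set D := c * δ⁻¹ * M / (1 - r)
  have hD : 0 ≤ D := by simp only [D, hr]; positivity
  refine ⟨1 + D, by positivity, fun θ hθ x ξ hξ hlaw X hX₀ hXsucc n => ?_⟩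
  obtain ⟨haθ, hθ₁⟩ : a ≤ θ ∧ θ < 1 := ⟨haK θ hθ, (hKsub hθ).2⟩
  have ha₁ : 0 ≤ 1 - a ^ 2 := by nlinarith
  have hbound := lintegral_noiseRecursion_le (x := x) (r := r) (b := c * δ⁻¹ * M)
    (V := fun y => ENNReal.ofReal (y ^ (2 * m))) (by fun_prop) (by fun_prop) (by fun_prop)
    (measurable_epidemicStep θ) (ofReal_epidemicStep_pow_le hm ha haθ hθ₁ (by positivity))
    (by positivity) (by rw [← sub_pos, hr]; positivity) (by positivity)
    (lintegral_ofReal_add_mul_pow_gaussianReal 0 1 ha₁ (by positivity) hm₂).le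
    (by simpa using (lintegral_ofReal_add_mul_pow_gaussianReal 0 1 le_rfl
      (s := c * δ⁻¹) (by positivity) hm₂).le)
    (fun i => .of_map_ne_zero (by rw [hlaw i]; exact IsProbabilityMeasure.ne_zero _)) hξ hlaw n
  have hx : 0 ≤ x ^ (2 * m) := hm₂.pow_nonneg x
  rw [eq_noiseRecursion (f := epidemicStep θ) hX₀ hXsucc]
  refine integral_le_of_lintegral_ofReal_le (ae_of_all _ fun ω => hm₂.pow_nonneg _)
    (by positivity) (hbound.trans ?_)
  rw [← ENNReal.ofReal_add hx hD]
  exact ENNReal.ofReal_le_ofReal (by nlinarith)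
end
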